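/- arXiv:1801.05926 — 6 statements merged into one kernel-verified Lean document; each statement's English description precedes it below -/
import Mathlib

section
/- Let S, X, Y be random variables on finite alphabets forming a Markov chain S → X → Y, with P_X(x) > 0 for all x. Then for all s, y with P_S(s) > 0 and P_Y(y) > 0, the ratio P_{S,Y}(s,y)/(P_S(s)P_Y(y)) is at most 1/(min_x P_X(x)). -/
theorem stmt_2 {S X Y : Type*} [Fintype S] [Fintype X] [Fintype Y] [Nonempty X]
    (P : S → X → Y → ℝ) (W : X → Y → ℝ)
    (hP : ∀ s x y, 0 ≤ P s x y) (hPsum : ∑ s, ∑ x, ∑ y, P s x y = 1)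
    (hW : ∀ x y, 0 ≤ W x y) (hWrow : ∀ x, ∑ y, W x y = 1)
    (hMarkov : ∀ s x y, P s x y = (∑ y', P s x y') * W x y)
    (hX : ∀ x, 0 < ∑ s, ∑ y, P s x y) :
    ∀ s y, 0 < (∑ x, ∑ y', P s x y') → 0 < (∑ s', ∑ x, P s' x y) →
      (∑ x, P s x y) / ((∑ x, ∑ y', P s x y') * (∑ s', ∑ x, P s' x y))
        ≤ 1 / (Finset.univ.inf' Finset.univ_nonempty (fun x => ∑ s, ∑ y, P s x y)) := by
  intro s y hS hY
  set f : X → ℝ := fun x => ∑ s, ∑ y, P s x y with hf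
  set m := Finset.univ.inf' Finset.univ_nonempty f with hmdef
  have hm : 0 < m := by
    rw [hmdef, Finset.lt_inf'_iff]
    intro x _
    exact hX x
  have hmle : ∀ x, m ≤ f x := fun x => Finset.inf'_le _ (Finset.mem_univ x)
  have hBnn : 0 ≤ ∑ x, ∑ y', P s x y' := le_of_lt hS
  rw [div_le_div_iff₀ (mul_pos hS hY) hm]
  have hC : (∑ s', ∑ x, P s' x y) = ∑ x, f x * W x y := by
    rw [Finset.sum_comm]
    refine Finset.sum_congr rfl fun x _ => ?_
    show (∑ s', P s' x y) = (∑ s'', ∑ y'', P s'' x y'') * W x y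
    rw [Finset.sum_mul]
    exact Finset.sum_congr rfl fun s' _ => (hMarkov s' x y)
  have key : (∑ x, P s x y) * m ≤ ∑ x, (∑ x', ∑ y', P s x' y') * (f x * W x y) := by
    rw [Finset.sum_mul]
    apply Finset.sum_le_sum
    intro x _
    rw [hMarkov s x y]
    have h1 : (∑ y', P s x y') ≤ ∑ x', ∑ y', P s x' y' :=
      Finset.single_le_sum (fun x' _ => Finset.sum_nonneg fun y' _ => hP s x' y')
        (Finset.mem_univ x)
    have h2 : (∑ y', P s x y') * W x y ≤ (∑ x', ∑ y', P s x' y') * W x y :=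
      mul_le_mul_of_nonneg_right h1 (hW x y)
    calc (∑ y', P s x y') * W x y * m
        ≤ (∑ x', ∑ y', P s x' y') * W x y * f x :=
          mul_le_mul h2 (hmle x) (le_of_lt hm) (mul_nonneg hBnn (hW x y))
      _ = (∑ x', ∑ y', P s x' y') * (f x * W x y) := by ring
  calc (∑ x, P s x y) * m ≤ ∑ x, (∑ x', ∑ y', P s x' y') * (f x * W x y) := key
    _ = 1 * ((∑ x, ∑ y', P s x y') * (∑ s', ∑ x, P s' x y)) := by
        rw [hC, Finset.mul_sum, one_mul]
end

section
/- Suppose S_i → X_i → Y_i for i = 1,2 with the same channel P_{Y|X}, that all marginals P_{S_i} and P_{X_i} are bounded below by δ > 0, and that f : [0,∞) → ℝ is Lipschitz on [0, 1/m_X] (with m_X the minimum X-marginal probability). Then |I_f(P_{S_1,Y_1}) − I_f(P_{S_2,Y_2})| ≤ (2K + (2/m_S + 1)L) · ‖P_{S_1,X_1} − P_{S_2,X_2}‖, where m_S is the minimum S-marginal probability over both distributions, K is the sup of |f| on [0, 1/m_X], and L is the Lipschitz constant of f on [0, 1/m_X]. -/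
open Finset

lemma stmt10_ratio (mS : ℝ) (hmS : 0 < mS) (a b c : ℝ) (ha : mS ≤ a) (hc : 0 ≤ c)
    (hcb : c ≤ b) : 0 ≤ c / (a * b) ∧ c / (a * b) ≤ 1 / mS := by
  have ha0 : 0 < a := hmS.trans_le ha
  have hb : 0 ≤ b := hc.trans hcb
  refine ⟨by positivity, ?_⟩
  rcases eq_or_lt_of_le hb with h | h
  · rw [← h, mul_zero, div_zero]; positivity
  · have hab : 0 < a * b := by positivity
    calc c / (a * b) ≤ b / (a * b) := by gcongr
      _ = 1 / a := by field_simp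
      _ ≤ 1 / mS := one_div_le_one_div_of_le hmS ha

lemma stmt10_ptwise (f : ℝ → ℝ) (mS mX K L : ℝ)
    (hmX : 0 < mX) (hmXS : mX ≤ mS)
    (hK : ∀ t ∈ Set.Icc (0:ℝ) (1/mX), |f t| ≤ K)
    (hL : ∀ t₁ ∈ Set.Icc (0:ℝ) (1/mX), ∀ t₂ ∈ Set.Icc (0:ℝ) (1/mX),
      |f t₁ - f t₂| ≤ L * |t₁ - t₂|)
    (hL0 : 0 ≤ L)
    (a1 b1 c1 a2 b2 c2 : ℝ)
    (ha1 : mS ≤ a1) (ha2 : mS ≤ a2)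
    (hc1 : 0 ≤ c1) (hc2 : 0 ≤ c2) (hc1b : c1 ≤ b1) (hc2b : c2 ≤ b2) :
    |a1 * b1 * f (c1 / (a1 * b1)) - a2 * b2 * f (c2 / (a2 * b2))|
      ≤ (K + L / mS) * |a1 * b1 - a2 * b2| + L * |c1 - c2| := by
  have hmS : 0 < mS := hmX.trans_le hmXS
  have ha1p : 0 < a1 := hmS.trans_le ha1
  have ha2p : 0 < a2 := hmS.trans_le ha2
  have hb1 : 0 ≤ b1 := hc1.trans hc1b
  have hb2 : 0 ≤ b2 := hc2.trans hc2b
  have hms_mx : 1 / mS ≤ 1 / mX := one_div_le_one_div_of_le hmX hmXS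
  obtain ⟨hr1a, hr1b⟩ := stmt10_ratio mS hmS a1 b1 c1 ha1 hc1 hc1b
  obtain ⟨hr2a, hr2b⟩ := stmt10_ratio mS hmS a2 b2 c2 ha2 hc2 hc2b
  set r1 := c1 / (a1 * b1) with hr1def
  set r2 := c2 / (a2 * b2) with hr2def
  have hm1 : r1 ∈ Set.Icc (0:ℝ) (1/mX) := ⟨hr1a, hr1b.trans hms_mx⟩
  have hm2 : r2 ∈ Set.Icc (0:ℝ) (1/mX) := ⟨hr2a, hr2b.trans hms_mx⟩
  -- a2*b2*r2 = c2
  have key2 : a2 * b2 * r2 = c2 := by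
    rcases eq_or_lt_of_le hb2 with h | h
    · have : c2 = 0 := le_antisymm (hc2b.trans_eq h.symm) hc2
      rw [← h, mul_zero, zero_mul, this]
    · have hab : (a2 * b2) ≠ 0 := by positivity
      rw [hr2def, mul_comm, div_mul_cancel₀ _ hab]
  -- key inequality
  have keyineq : |a2 * b2 * r1 - c2| ≤ (1 / mS) * |a1 * b1 - a2 * b2| + |c1 - c2| := by
    rcases eq_or_lt_of_le (hc1.trans hc1b) with h | h
    · have hc10 : c1 = 0 := le_antisymm (hc1b.trans_eq h.symm) hc1
      have : r1 = 0 := by rw [hr1def, ← h, hc10, zero_div]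
      rw [this, mul_zero, hc10]
      have h1 : 0 ≤ (1 / mS) * |a1 * b1 - a2 * b2| := by positivity
      linarith [abs_nonneg (a1*b1 - a2*b2)]
    · have hab : (a1 * b1) ≠ 0 := by positivity
      have hid : a2 * b2 * r1 - c2 = r1 * (a2 * b2 - a1 * b1) + (c1 - c2) := by
        rw [hr1def]; field_simp; ring
      rw [hid]
      calc |r1 * (a2 * b2 - a1 * b1) + (c1 - c2)|
          ≤ |r1 * (a2 * b2 - a1 * b1)| + |c1 - c2| := abs_add_le _ _
        _ = r1 * |a2 * b2 - a1 * b1| + |c1 - c2| := by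
            rw [abs_mul, abs_of_nonneg hr1a]
        _ ≤ (1 / mS) * |a1 * b1 - a2 * b2| + |c1 - c2| := by
            rw [abs_sub_comm (a2*b2)]
            exact add_le_add_left (mul_le_mul_of_nonneg_right hr1b (abs_nonneg _)) _
  have hid2 : a1 * b1 * f r1 - a2 * b2 * f r2
      = (a1 * b1 - a2 * b2) * f r1 + a2 * b2 * (f r1 - f r2) := by ring
  calc |a1 * b1 * f r1 - a2 * b2 * f r2|
      ≤ |(a1 * b1 - a2 * b2) * f r1| + |a2 * b2 * (f r1 - f r2)| := by
        rw [hid2]; exact abs_add_le _ _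
    _ = |a1 * b1 - a2 * b2| * |f r1| + (a2 * b2) * |f r1 - f r2| := by
        rw [abs_mul, abs_mul, abs_of_nonneg (by positivity : (0:ℝ) ≤ a2 * b2)]
    _ ≤ |a1 * b1 - a2 * b2| * K + (a2 * b2) * (L * |r1 - r2|) := by
        gcongr
        · exact hK r1 hm1
        · exact hL r1 hm1 r2 hm2
    _ = |a1 * b1 - a2 * b2| * K + L * |a2 * b2 * r1 - a2 * b2 * r2| := by
        rw [← mul_sub, abs_mul, abs_of_nonneg (by positivity : (0:ℝ) ≤ a2 * b2)]
        ring
    _ = |a1 * b1 - a2 * b2| * K + L * |a2 * b2 * r1 - c2| := by rw [key2]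
    _ ≤ |a1 * b1 - a2 * b2| * K + L * ((1 / mS) * |a1 * b1 - a2 * b2| + |c1 - c2|) := by
        gcongr
    _ = (K + L / mS) * |a1 * b1 - a2 * b2| + L * |c1 - c2| := by ring

lemma stmt10_main {S Y : Type*} [Fintype S] [Fintype Y]
    (a1 a2 : S → ℝ) (b1 b2 : Y → ℝ) (c1 c2 : S → Y → ℝ)
    (f : ℝ → ℝ) (mS mX K L ε : ℝ)
    (hmX : 0 < mX) (hmXS : mX ≤ mS)
    (hK : ∀ t ∈ Set.Icc (0:ℝ) (1/mX), |f t| ≤ K)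
    (hL : ∀ t₁ ∈ Set.Icc (0:ℝ) (1/mX), ∀ t₂ ∈ Set.Icc (0:ℝ) (1/mX),
      |f t₁ - f t₂| ≤ L * |t₁ - t₂|)
    (hK0 : 0 ≤ K) (hL0 : 0 ≤ L)
    (ha1 : ∀ s, mS ≤ a1 s) (ha2 : ∀ s, mS ≤ a2 s)
    (hc1 : ∀ s y, 0 ≤ c1 s y) (hc2 : ∀ s y, 0 ≤ c2 s y)
    (hc1b : ∀ s y, c1 s y ≤ b1 y) (hc2b : ∀ s y, c2 s y ≤ b2 y)
    (hb1sum : ∑ y, b1 y = 1) (ha2sum : ∑ s, a2 s = 1)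
    (hΔa : ∑ s, |a1 s - a2 s| ≤ ε)
    (hΔb : ∑ y, |b1 y - b2 y| ≤ ε)
    (hΔc : ∑ s, ∑ y, |c1 s y - c2 s y| ≤ ε) :
    |(∑ s, ∑ y, a1 s * b1 y * f (c1 s y / (a1 s * b1 y)))
      - ∑ s, ∑ y, a2 s * b2 y * f (c2 s y / (a2 s * b2 y))|
      ≤ (2 * K + (2 / mS + 1) * L) * ε := by
  have hmS : 0 < mS := hmX.trans_le hmXS
  have hSab : ∑ s, ∑ y, |a1 s * b1 y - a2 s * b2 y| ≤ 2 * ε := by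
    have hpt : ∀ s y, |a1 s * b1 y - a2 s * b2 y|
        ≤ |a1 s - a2 s| * b1 y + a2 s * |b1 y - b2 y| := by
      intro s y
      have hb1y : 0 ≤ b1 y := (hc1 s y).trans (hc1b s y)
      have ha2y : 0 ≤ a2 s := (hmS.trans_le (ha2 s)).le
      have hid : a1 s * b1 y - a2 s * b2 y
          = (a1 s - a2 s) * b1 y + a2 s * (b1 y - b2 y) := by ring
      rw [hid]
      calc |(a1 s - a2 s) * b1 y + a2 s * (b1 y - b2 y)|
          ≤ |(a1 s - a2 s) * b1 y| + |a2 s * (b1 y - b2 y)| := abs_add_le _ _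
        _ = |a1 s - a2 s| * b1 y + a2 s * |b1 y - b2 y| := by
            rw [abs_mul, abs_mul, abs_of_nonneg hb1y, abs_of_nonneg ha2y]
    calc ∑ s, ∑ y, |a1 s * b1 y - a2 s * b2 y|
        ≤ ∑ s, ∑ y, (|a1 s - a2 s| * b1 y + a2 s * |b1 y - b2 y|) :=
          Finset.sum_le_sum fun s _ => Finset.sum_le_sum fun y _ => hpt s y
      _ = (∑ s, |a1 s - a2 s|) * (∑ y, b1 y) + (∑ s, a2 s) * (∑ y, |b1 y - b2 y|) := by
          simp only [Finset.sum_add_distrib, ← Finset.mul_sum, ← Finset.sum_mul]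
      _ ≤ ε * 1 + 1 * ε := by
          rw [hb1sum, ha2sum]; exact add_le_add (by linarith) (by linarith)
      _ = 2 * ε := by ring
  calc |(∑ s, ∑ y, a1 s * b1 y * f (c1 s y / (a1 s * b1 y)))
      - ∑ s, ∑ y, a2 s * b2 y * f (c2 s y / (a2 s * b2 y))|
      = |∑ s, ∑ y, (a1 s * b1 y * f (c1 s y / (a1 s * b1 y))
          - a2 s * b2 y * f (c2 s y / (a2 s * b2 y)))| := by
        simp only [Finset.sum_sub_distrib]
    _ ≤ ∑ s, ∑ y, |a1 s * b1 y * f (c1 s y / (a1 s * b1 y))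
          - a2 s * b2 y * f (c2 s y / (a2 s * b2 y))| :=
        le_trans (Finset.abs_sum_le_sum_abs _ _)
          (Finset.sum_le_sum fun s _ => Finset.abs_sum_le_sum_abs _ _)
    _ ≤ ∑ s, ∑ y, ((K + L / mS) * |a1 s * b1 y - a2 s * b2 y| + L * |c1 s y - c2 s y|) :=
        Finset.sum_le_sum fun s _ => Finset.sum_le_sum fun y _ =>
          stmt10_ptwise f mS mX K L hmX hmXS hK hL hL0 _ _ _ _ _ _
            (ha1 s) (ha2 s) (hc1 s y) (hc2 s y) (hc1b s y) (hc2b s y)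
    _ = (K + L / mS) * (∑ s, ∑ y, |a1 s * b1 y - a2 s * b2 y|)
          + L * (∑ s, ∑ y, |c1 s y - c2 s y|) := by
        simp only [Finset.sum_add_distrib, Finset.mul_sum]
    _ ≤ (K + L / mS) * (2 * ε) + L * ε := by
        have h1 : 0 ≤ K + L / mS := by positivity
        exact add_le_add (mul_le_mul_of_nonneg_left hSab h1)
          (mul_le_mul_of_nonneg_left hΔc hL0)
    _ = (2 * K + (2 / mS + 1) * L) * ε := by field_simp; ring

theorem stmt_10 {S X Y : Type*} [Fintype S] [Fintype X] [Fintype Y]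
    (P1 P2 : S → X → ℝ) (W : X → Y → ℝ)
    (hP1 : ∀ s x, 0 ≤ P1 s x) (hP1sum : ∑ s, ∑ x, P1 s x = 1)
    (hP2 : ∀ s x, 0 ≤ P2 s x) (hP2sum : ∑ s, ∑ x, P2 s x = 1)
    (hW : ∀ x y, 0 ≤ W x y) (hWrow : ∀ x, ∑ y, W x y = 1)
    (f : ℝ → ℝ) (mS mX K L : ℝ)
    (hconv : ConvexOn ℝ (Set.Ici (0 : ℝ)) f) (hf1 : f 1 = 0)
    (hmX : 0 < mX) (hmXS : mX ≤ mS)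
    (hS1 : ∀ s, mS ≤ ∑ x, P1 s x) (hS2 : ∀ s, mS ≤ ∑ x, P2 s x)
    (hX1 : ∀ x, mX ≤ ∑ s, P1 s x) (hX2 : ∀ x, mX ≤ ∑ s, P2 s x)
    (hK : ∀ t ∈ Set.Icc (0 : ℝ) (1 / mX), |f t| ≤ K)
    (hL : ∀ t₁ ∈ Set.Icc (0 : ℝ) (1 / mX), ∀ t₂ ∈ Set.Icc (0 : ℝ) (1 / mX),
      |f t₁ - f t₂| ≤ L * |t₁ - t₂|) :
    |(∑ s, ∑ y, (∑ x, P1 s x) * (∑ s', ∑ x, P1 s' x * W x y)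
        * f ((∑ x, P1 s x * W x y) / ((∑ x, P1 s x) * (∑ s', ∑ x, P1 s' x * W x y))))
      - (∑ s, ∑ y, (∑ x, P2 s x) * (∑ s', ∑ x, P2 s' x * W x y)
        * f ((∑ x, P2 s x * W x y) / ((∑ x, P2 s x) * (∑ s', ∑ x, P2 s' x * W x y))))|
      ≤ (2 * K + (2 / mS + 1) * L) * ∑ s, ∑ x, |P1 s x - P2 s x| := by
  have h0mem : (0:ℝ) ∈ Set.Icc (0:ℝ) (1/mX) := ⟨le_refl _, by positivity⟩
  have h1mem : (1/mX) ∈ Set.Icc (0:ℝ) (1/mX) := ⟨by positivity, le_refl _⟩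
  have hK0 : 0 ≤ K := (abs_nonneg (f 0)).trans (hK 0 h0mem)
  have hL0 : 0 ≤ L := by
    have h := hL 0 h0mem (1/mX) h1mem
    rw [zero_sub, abs_neg, abs_of_pos (one_div_pos.mpr hmX)] at h
    have h' : (0:ℝ) * (1/mX) ≤ L * (1/mX) := by
      rw [zero_mul]; exact (abs_nonneg _).trans h
    exact le_of_mul_le_mul_right h' (one_div_pos.mpr hmX)
  have hb1sum : ∑ y, ∑ s', ∑ x, P1 s' x * W x y = 1 := by
    rw [Finset.sum_comm]
    calc ∑ s, ∑ y, ∑ x, P1 s x * W x y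
        = ∑ s, ∑ x, ∑ y, P1 s x * W x y :=
          Finset.sum_congr rfl fun s _ => Finset.sum_comm
      _ = ∑ s, ∑ x, P1 s x * ∑ y, W x y := by simp only [Finset.mul_sum]
      _ = 1 := by simp only [hWrow, mul_one]; exact hP1sum
  have hΔa : ∑ s, |(∑ x, P1 s x) - ∑ x, P2 s x| ≤ ∑ s, ∑ x, |P1 s x - P2 s x| :=
    Finset.sum_le_sum fun s _ => by
      rw [← Finset.sum_sub_distrib]; exact Finset.abs_sum_le_sum_abs _ _
  have hΔb : ∑ y, |(∑ s', ∑ x, P1 s' x * W x y) - ∑ s', ∑ x, P2 s' x * W x y|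
      ≤ ∑ s, ∑ x, |P1 s x - P2 s x| := by
    calc ∑ y, |(∑ s', ∑ x, P1 s' x * W x y) - ∑ s', ∑ x, P2 s' x * W x y|
        ≤ ∑ y, ∑ s, ∑ x, |P1 s x - P2 s x| * W x y := by
          refine Finset.sum_le_sum fun y _ => ?_
          simp only [← Finset.sum_sub_distrib, ← sub_mul]
          refine le_trans (Finset.abs_sum_le_sum_abs _ _)
            (Finset.sum_le_sum fun s _ => le_trans (Finset.abs_sum_le_sum_abs _ _)
              (Finset.sum_le_sum fun x _ => ?_))
          rw [abs_mul, abs_of_nonneg (hW x y)]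
      _ = ∑ s, ∑ x, |P1 s x - P2 s x| := by
          rw [Finset.sum_comm]
          refine Finset.sum_congr rfl fun s _ => ?_
          rw [Finset.sum_comm]
          refine Finset.sum_congr rfl fun x _ => ?_
          rw [← Finset.mul_sum, hWrow, mul_one]
  have hΔc : ∑ s, ∑ y, |(∑ x, P1 s x * W x y) - ∑ x, P2 s x * W x y|
      ≤ ∑ s, ∑ x, |P1 s x - P2 s x| := by
    refine Finset.sum_le_sum fun s _ => ?_
    calc ∑ y, |(∑ x, P1 s x * W x y) - ∑ x, P2 s x * W x y|
        ≤ ∑ y, ∑ x, |P1 s x - P2 s x| * W x y := by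
          refine Finset.sum_le_sum fun y _ => ?_
          simp only [← Finset.sum_sub_distrib, ← sub_mul]
          refine le_trans (Finset.abs_sum_le_sum_abs _ _)
            (Finset.sum_le_sum fun x _ => ?_)
          rw [abs_mul, abs_of_nonneg (hW x y)]
      _ = ∑ x, |P1 s x - P2 s x| := by
          rw [Finset.sum_comm]
          refine Finset.sum_congr rfl fun x _ => ?_
          rw [← Finset.mul_sum, hWrow, mul_one]
  exact stmt10_main (fun s => ∑ x, P1 s x) (fun s => ∑ x, P2 s x)
    (fun y => ∑ s', ∑ x, P1 s' x * W x y) (fun y => ∑ s', ∑ x, P2 s' x * W x y)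
    (fun s y => ∑ x, P1 s x * W x y) (fun s y => ∑ x, P2 s x * W x y)
    f mS mX K L _ hmX hmXS hK hL hK0 hL0 hS1 hS2
    (fun s y => Finset.sum_nonneg fun x _ => mul_nonneg (hP1 s x) (hW x y))
    (fun s y => Finset.sum_nonneg fun x _ => mul_nonneg (hP2 s x) (hW x y))
    (fun s y => Finset.single_le_sum (f := fun s' => ∑ x, P1 s' x * W x y)
      (fun s' _ => Finset.sum_nonneg fun x _ => mul_nonneg (hP1 s' x) (hW x y))
      (Finset.mem_univ s))
    (fun s y => Finset.single_le_sum (f := fun s' => ∑ x, P2 s' x * W x y)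
      (fun s' _ => Finset.sum_nonneg fun x _ => mul_nonneg (hP2 s' x) (hW x y))
      (Finset.mem_univ s))
    hb1sum hP2sum hΔa hΔb hΔc
end

section
/- With H, L, U, C_L, C_U, α, r₀ as in the robust privacy-utility setup, and with F* any mechanism that is ε-private for every distribution Q in the ℓ1-ball of radius r around P̂ and maximizes the worst-case utility over that ball, one has H(P̂; ε − C_L r^α) − C_U r^α ≤ U(P, F*) for every P in the ball, provided r^α ≤ (ε − min_F L(P̂,F))/C_L and r ≤ r₀. -/
/-- `Q` is a joint probability mass function on `S × X`. -/
def IsPmf {S X : Type*} [Fintype S] [Fintype X] (Q : S → X → ℝ) : Prop :=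
  (∀ s x, 0 ≤ Q s x) ∧ ∑ s, ∑ x, Q s x = 1

/-- `F` is a row-stochastic matrix (privacy mechanism). -/
def IsChan {X Y : Type*} [Fintype Y] (F : X → Y → ℝ) : Prop :=
  (∀ x y, 0 ≤ F x y) ∧ ∀ x, ∑ y, F x y = 1

/-- ℓ1 distance between joint distributions on `S × X`. -/
def l1 {S X : Type*} [Fintype S] [Fintype X] (P Q : S → X → ℝ) : ℝ :=
  ∑ s, ∑ x, |P s x - Q s x|

/-- The privacy-utility function `H(P; ε)`, with mechanisms having
`|𝒳| + 1` output symbols. -/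
noncomputable def Hfun {S X : Type*} [Fintype S] [Fintype X]
    (L U : (S → X → ℝ) → (X → Fin (Fintype.card X + 1) → ℝ) → ℝ)
    (P : S → X → ℝ) (ε : ℝ) : ℝ :=
  sSup {u | ∃ F, IsChan F ∧ L P F ≤ ε ∧ U P F = u}

theorem stmt_12 {S X : Type*} [Fintype S] [Fintype X]
    (L U : (S → X → ℝ) → (X → Fin (Fintype.card X + 1) → ℝ) → ℝ)
    (CL CU α r₀ r ε : ℝ) (Phat P : S → X → ℝ)
    (Fstar : X → Fin (Fintype.card X + 1) → ℝ)
    (hCL : 0 ≤ CL) (hCU : 0 ≤ CU) (hα0 : 0 < α) (hα1 : α ≤ 1) (hr₀ : 0 < r₀)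
    (hPhat : IsPmf Phat) (hP : IsPmf P)
    (hball : l1 Phat P ≤ r) (hrr₀ : r ≤ r₀)
    (hHolderL : ∀ Q F, IsPmf Q → IsChan F → l1 Phat Q ≤ r₀ →
      |L Phat F - L Q F| ≤ CL * (l1 Phat Q) ^ α)
    (hHolderU : ∀ Q F, IsPmf Q → IsChan F → l1 Phat Q ≤ r₀ →
      |U Phat F - U Q F| ≤ CU * (l1 Phat Q) ^ α)
    -- `F*` has at least the worst-case utility of any mechanism that is
    -- `ε`-private for every distribution in the `r`-ball around `Phat`
    -- (lower bound \eqref{eq:LowerBoundR}):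
    (hFstarOpt : ∀ F, IsChan F →
      (∀ Q, IsPmf Q → l1 Phat Q ≤ r → L Q F ≤ ε) →
      sInf {u | ∃ Q, IsPmf Q ∧ l1 Phat Q ≤ r ∧ U Q F = u} ≤ U P Fstar)
    -- the supremum defining `H(Phat; ε - CL r^α)` is attained:
    (hAttain : ∃ F₀, IsChan F₀ ∧ L Phat F₀ ≤ ε - CL * r ^ α ∧
      U Phat F₀ = Hfun L U Phat (ε - CL * r ^ α)) :
    Hfun L U Phat (ε - CL * r ^ α) - CU * r ^ α ≤ U P Fstar := by
  obtain ⟨F₀, hF₀chan, hF₀L, hF₀U⟩ := hAttain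
  have hl1nonneg : ∀ Q : S → X → ℝ, 0 ≤ l1 Phat Q := by
    intro Q
    exact Finset.sum_nonneg fun s _ => Finset.sum_nonneg fun x _ => abs_nonneg _
  have hr : 0 ≤ r := le_trans (hl1nonneg P) hball
  have hpow : ∀ Q : S → X → ℝ, l1 Phat Q ≤ r → (l1 Phat Q) ^ α ≤ r ^ α := by
    intro Q hQ
    exact Real.rpow_le_rpow (hl1nonneg Q) hQ hα0.le
  have hpriv : ∀ Q, IsPmf Q → l1 Phat Q ≤ r → L Q F₀ ≤ ε := by
    intro Q hQ hQr
    have h := hHolderL Q F₀ hQ hF₀chan (hQr.trans hrr₀)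
    have h3 : CL * (l1 Phat Q) ^ α ≤ CL * r ^ α :=
      mul_le_mul_of_nonneg_left (hpow Q hQr) hCL
    nlinarith [abs_le.mp h]
  have hInf := hFstarOpt F₀ hF₀chan hpriv
  refine le_trans ?_ hInf
  have hne : {u | ∃ Q, IsPmf Q ∧ l1 Phat Q ≤ r ∧ U Q F₀ = u}.Nonempty := by
    refine ⟨U Phat F₀, Phat, hPhat, ?_, rfl⟩
    have : l1 Phat Phat = 0 := by
      simp [l1]
    linarith
  refine le_csInf hne ?_
  rintro u ⟨Q, hQ, hQr, rfl⟩
  have h := hHolderU Q F₀ hQ hF₀chan (hQr.trans hrr₀)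
  have h3 : CU * (l1 Phat Q) ^ α ≤ CU * r ^ α :=
    mul_le_mul_of_nonneg_left (hpow Q hQr) hCU
  have := abs_le.mp h
  rw [← hF₀U] at *
  linarith [this.1, this.2]
end

section
/- Combining both directions: under the assumptions of the robust privacy-utility theorem, for all ε and all r with r ≤ r₀ and C_L r^α ≤ ε − min_F L(P̂,F), and P with ‖P−P̂‖ ≤ r, the utility degradation satisfies H(P;ε) − U(P, F*) ≤ H(P̂; ε + C_L r^α) − H(P̂; ε − C_L r^α) + 2 C_U r^α. -/
theorem stmt_13 {S X : Type*} [Fintype S] [Fintype X]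
    (L U : (S → X → ℝ) → (X → Fin (Fintype.card X + 1) → ℝ) → ℝ)
    (CL CU α r₀ r ε : ℝ) (Phat P : S → X → ℝ)
    (Fstar : X → Fin (Fintype.card X + 1) → ℝ)
    (hCL : 0 ≤ CL) (hCU : 0 ≤ CU) (hα0 : 0 < α) (hα1 : α ≤ 1) (hr₀ : 0 < r₀)
    (hPhat : IsPmf Phat) (hP : IsPmf P)
    (hball : l1 Phat P ≤ r) (hrr₀ : r ≤ r₀)
    (hHolderL : ∀ Q F, IsPmf Q → IsChan F → l1 Phat Q ≤ r₀ →
      |L Phat F - L Q F| ≤ CL * (l1 Phat Q) ^ α)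
    (hHolderU : ∀ Q F, IsPmf Q → IsChan F → l1 Phat Q ≤ r₀ →
      |U Phat F - U Q F| ≤ CU * (l1 Phat Q) ^ α)
    (hBdd : ∀ (Q : S → X → ℝ) (ε' : ℝ),
      BddAbove {u | ∃ F, IsChan F ∧ L Q F ≤ ε' ∧ U Q F = u})
    -- `F*` has at least the worst-case utility of any mechanism that is
    -- `ε`-private for every distribution in the `r`-ball around `Phat`:
    (hFstarOpt : ∀ F, IsChan F →
      (∀ Q, IsPmf Q → l1 Phat Q ≤ r → L Q F ≤ ε) →
      sInf {u | ∃ Q, IsPmf Q ∧ l1 Phat Q ≤ r ∧ U Q F = u} ≤ U P Fstar)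
    -- the suprema defining `H(P; ε)` and `H(Phat; ε - CL r^α)` are attained:
    (hAttainP : ∃ F, IsChan F ∧ L P F ≤ ε ∧ U P F = Hfun L U P ε)
    (hAttainPhat : ∃ F₀, IsChan F₀ ∧ L Phat F₀ ≤ ε - CL * r ^ α ∧
      U Phat F₀ = Hfun L U Phat (ε - CL * r ^ α)) :
    Hfun L U P ε - U P Fstar
      ≤ Hfun L U Phat (ε + CL * r ^ α) - Hfun L U Phat (ε - CL * r ^ α)
        + 2 * CU * r ^ α := by

  -- basic positivity facts
  have hl1P : 0 ≤ l1 Phat P := by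
    unfold l1; positivity
  have hr : 0 ≤ r := hl1P.trans hball
  have hmono : ∀ x : ℝ, 0 ≤ x → x ≤ r → x ^ α ≤ r ^ α := fun x hx hxr =>
    Real.rpow_le_rpow hx hxr hα0.le
  obtain ⟨F, hFchan, hFL, hFU⟩ := hAttainP
  obtain ⟨F₀, hF₀chan, hF₀L, hF₀U⟩ := hAttainPhat
  -- Step 1 : Hfun L U P ε ≤ Hfun L U Phat (ε + CL * r ^ α) + CU * r ^ α
  have hLF : |L Phat F - L P F| ≤ CL * r ^ α := by
    refine (hHolderL P F hP hFchan (hball.trans hrr₀)).trans ?_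
    exact mul_le_mul_of_nonneg_left (hmono _ hl1P hball) hCL
  have hUF : |U Phat F - U P F| ≤ CU * r ^ α := by
    refine (hHolderU P F hP hFchan (hball.trans hrr₀)).trans ?_
    exact mul_le_mul_of_nonneg_left (hmono _ hl1P hball) hCU
  have hmem : U Phat F ∈ {u | ∃ F', IsChan F' ∧ L Phat F' ≤ ε + CL * r ^ α ∧ U Phat F' = u} := by
    refine ⟨F, hFchan, ?_, rfl⟩
    have := (abs_le.mp hLF).2
    linarith
  have step1 : Hfun L U P ε ≤ Hfun L U Phat (ε + CL * r ^ α) + CU * r ^ α := by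
    have h1 : U Phat F ≤ Hfun L U Phat (ε + CL * r ^ α) :=
      le_csSup (hBdd Phat (ε + CL * r ^ α)) hmem
    have h2 := (abs_le.mp hUF).1
    rw [← hFU]
    linarith
  -- Step 2 : Hfun L U Phat (ε - CL * r ^ α) ≤ U P Fstar + CU * r ^ α
  have hpriv : ∀ Q, IsPmf Q → l1 Phat Q ≤ r → L Q F₀ ≤ ε := by
    intro Q hQ hQr
    have hQ0 : 0 ≤ l1 Phat Q := by unfold l1; positivity
    have h := (hHolderL Q F₀ hQ hF₀chan (hQr.trans hrr₀)).trans
      (mul_le_mul_of_nonneg_left (hmono _ hQ0 hQr) hCL)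
    have := (abs_le.mp h).1
    linarith
  have hinf : U Phat F₀ - CU * r ^ α ≤
      sInf {u | ∃ Q, IsPmf Q ∧ l1 Phat Q ≤ r ∧ U Q F₀ = u} := by
    refine le_csInf ⟨U P F₀, P, hP, hball, rfl⟩ ?_
    rintro u ⟨Q, hQ, hQr, rfl⟩
    have hQ0 : 0 ≤ l1 Phat Q := by unfold l1; positivity
    have h := (hHolderU Q F₀ hQ hF₀chan (hQr.trans hrr₀)).trans
      (mul_le_mul_of_nonneg_left (hmono _ hQ0 hQr) hCU)
    have := (abs_le.mp h).2
    linarith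
  have step2 : Hfun L U Phat (ε - CL * r ^ α) ≤ U P Fstar + CU * r ^ α := by
    have := (hFstarOpt F₀ hF₀chan hpriv)
    rw [← hF₀U]
    linarith
  linarith
end

section
/- If additionally ε ↦ H(P̂;ε) is Lipschitz with constant ℒ, then the utility degradation due to the uniform privacy guarantee satisfies H(P;ε) − U(P,F*) ≤ 2(C_U + ℒ C_L) r^α. -/
theorem stmt_14 {S X : Type*} [Fintype S] [Fintype X]
    (L U : (S → X → ℝ) → (X → Fin (Fintype.card X + 1) → ℝ) → ℝ)
    (CL CU α r₀ r ε : ℝ) (Phat P : S → X → ℝ)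
    (Fstar : X → Fin (Fintype.card X + 1) → ℝ)
    (hCL : 0 ≤ CL) (hCU : 0 ≤ CU) (hα0 : 0 < α) (hα1 : α ≤ 1) (hr₀ : 0 < r₀)
    (hPhat : IsPmf Phat) (hP : IsPmf P)
    (hball : l1 Phat P ≤ r) (hrr₀ : r ≤ r₀)
    (hHolderL : ∀ Q F, IsPmf Q → IsChan F → l1 Phat Q ≤ r₀ →
      |L Phat F - L Q F| ≤ CL * (l1 Phat Q) ^ α)
    (hHolderU : ∀ Q F, IsPmf Q → IsChan F → l1 Phat Q ≤ r₀ →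
      |U Phat F - U Q F| ≤ CU * (l1 Phat Q) ^ α)
    (hBdd : ∀ (Q : S → X → ℝ) (ε' : ℝ),
      BddAbove {u | ∃ F, IsChan F ∧ L Q F ≤ ε' ∧ U Q F = u})
    -- `F*` has at least the worst-case utility of any mechanism that is
    -- `ε`-private for every distribution in the `r`-ball around `Phat`:
    (hFstarOpt : ∀ F, IsChan F →
      (∀ Q, IsPmf Q → l1 Phat Q ≤ r → L Q F ≤ ε) →
      sInf {u | ∃ Q, IsPmf Q ∧ l1 Phat Q ≤ r ∧ U Q F = u} ≤ U P Fstar)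
    -- the suprema defining `H(P; ε)` and `H(Phat; ε - CL r^α)` are attained:
    (hAttainP : ∃ F, IsChan F ∧ L P F ≤ ε ∧ U P F = Hfun L U P ε)
    (hAttainPhat : ∃ F₀, IsChan F₀ ∧ L Phat F₀ ≤ ε - CL * r ^ α ∧
      U Phat F₀ = Hfun L U Phat (ε - CL * r ^ α)) :
    ∀ ℒ : ℝ, (∀ ε₁ ∈ Set.Icc (ε - CL * r ^ α) (ε + CL * r ^ α),
      ∀ ε₂ ∈ Set.Icc (ε - CL * r ^ α) (ε + CL * r ^ α),
      |Hfun L U Phat ε₁ - Hfun L U Phat ε₂| ≤ ℒ * |ε₁ - ε₂|) →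
    Hfun L U P ε - U P Fstar ≤ 2 * (CU + ℒ * CL) * r ^ α := by
  intro ℒ hLip
  have hl1nn : ∀ Q : S → X → ℝ, 0 ≤ l1 Phat Q := fun Q =>
    Finset.sum_nonneg fun s _ => Finset.sum_nonneg fun x _ => abs_nonneg _
  have hr : 0 ≤ r := (hl1nn P).trans hball
  have hrα : 0 ≤ r ^ α := Real.rpow_nonneg hr α
  have hcnn : 0 ≤ CL * r ^ α := mul_nonneg hCL hrα
  have hpow : ∀ Q : S → X → ℝ, l1 Phat Q ≤ r → (l1 Phat Q) ^ α ≤ r ^ α :=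
    fun Q h => Real.rpow_le_rpow (hl1nn Q) h hα0.le
  obtain ⟨F, hF, hLF, hUF⟩ := hAttainP
  obtain ⟨F₀, hF₀, hLF₀, hUF₀⟩ := hAttainPhat
  -- Step A : Hfun P ε ≤ Hfun Phat (ε + CL r^α) + CU r^α
  have hUPF : |U Phat F - U P F| ≤ CU * r ^ α :=
    (hHolderU P F hP hF (hball.trans hrr₀)).trans
      (mul_le_mul_of_nonneg_left (hpow P hball) hCU)
  have hLPF : |L Phat F - L P F| ≤ CL * r ^ α :=
    (hHolderL P F hP hF (hball.trans hrr₀)).trans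
      (mul_le_mul_of_nonneg_left (hpow P hball) hCL)
  have hLF' : L Phat F ≤ ε + CL * r ^ α := by
    have := (abs_le.1 hLPF).2
    linarith
  have hmem : U Phat F ∈ {u | ∃ F', IsChan F' ∧ L Phat F' ≤ ε + CL * r ^ α ∧ U Phat F' = u} :=
    ⟨F, hF, hLF', rfl⟩
  have hA : Hfun L U P ε ≤ Hfun L U Phat (ε + CL * r ^ α) + CU * r ^ α := by
    have h1 : U Phat F ≤ Hfun L U Phat (ε + CL * r ^ α) :=
      le_csSup (hBdd Phat (ε + CL * r ^ α)) hmem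
    have := (abs_le.1 hUPF).1
    linarith [hUF]
  -- Step B : Hfun Phat (ε - CL r^α) - CU r^α ≤ U P Fstar
  have hpriv : ∀ Q, IsPmf Q → l1 Phat Q ≤ r → L Q F₀ ≤ ε := by
    intro Q hQ hQr
    have h := (hHolderL Q F₀ hQ hF₀ (hQr.trans hrr₀)).trans
      (mul_le_mul_of_nonneg_left (hpow Q hQr) hCL)
    have := (abs_le.1 h).1
    linarith
  have hInf := hFstarOpt F₀ hF₀ hpriv
  have hPhatself : l1 Phat Phat = 0 := by
    simp [l1]
  have hB : U Phat F₀ - CU * r ^ α ≤ sInf {u | ∃ Q, IsPmf Q ∧ l1 Phat Q ≤ r ∧ U Q F₀ = u} := by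
    have hne : Set.Nonempty {u | ∃ Q, IsPmf Q ∧ l1 Phat Q ≤ r ∧ U Q F₀ = u} :=
      ⟨U Phat F₀, Phat, hPhat, by rw [hPhatself]; exact hr, rfl⟩
    apply le_csInf hne
    rintro u ⟨Q, hQ, hQr, rfl⟩
    have h := (hHolderU Q F₀ hQ hF₀ (hQr.trans hrr₀)).trans
      (mul_le_mul_of_nonneg_left (hpow Q hQr) hCU)
    have := (abs_le.1 h).2
    linarith
  -- Step C : Lipschitz
  have hε1 : ε + CL * r ^ α ∈ Set.Icc (ε - CL * r ^ α) (ε + CL * r ^ α) :=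
    ⟨by linarith, le_refl _⟩
  have hε2 : ε - CL * r ^ α ∈ Set.Icc (ε - CL * r ^ α) (ε + CL * r ^ α) :=
    ⟨le_refl _, by linarith⟩
  have hC := hLip _ hε1 _ hε2
  have habs : |(ε + CL * r ^ α) - (ε - CL * r ^ α)| = 2 * (CL * r ^ α) := by
    rw [abs_of_nonneg (by linarith)]; ring
  rw [habs] at hC
  have hC' : Hfun L U Phat (ε + CL * r ^ α) - Hfun L U Phat (ε - CL * r ^ α)
      ≤ ℒ * (2 * (CL * r ^ α)) := (le_abs_self _).trans hC
  have hfinal : Hfun L U Phat (ε - CL * r ^ α) - CU * r ^ α ≤ U P Fstar := by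
    rw [← hUF₀] at *
    linarith [hB.trans hInf]
  linarith
end

section
/- For any joint pmf Q on finite 𝒮 × 𝒳 and any row-stochastic F : 𝒳 × 𝒴 → [0,1], the leakage L(Q,F) = ∑_y max_s ∑_x Q(s,x)F(x,y) satisfies P_c(S) ≤ L(Q,F) ≤ P_c(S|X), where P_c(S) = max_s Q_S(s) and P_c(S|X) = ∑_x max_s Q(s,x). -/
theorem stmt_18 {S X Y : Type*} [Fintype S] [Fintype X] [Fintype Y]
    [Nonempty S] [Nonempty X] [Nonempty Y]
    (Q : S → X → ℝ) (F : X → Y → ℝ)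
    (hQ : ∀ s x, 0 ≤ Q s x) (hQsum : ∑ s, ∑ x, Q s x = 1)
    (hF : ∀ x y, 0 ≤ F x y) (hFrow : ∀ x, ∑ y, F x y = 1) :
    Finset.univ.sup' Finset.univ_nonempty (fun s => ∑ x, Q s x)
      ≤ ∑ y, Finset.univ.sup' Finset.univ_nonempty (fun s => ∑ x, Q s x * F x y)
    ∧ ∑ y, Finset.univ.sup' Finset.univ_nonempty (fun s => ∑ x, Q s x * F x y)
      ≤ ∑ x, Finset.univ.sup' Finset.univ_nonempty (fun s => Q s x) := by
  constructor
  · apply Finset.sup'_le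
    intro s _
    have h : ∑ x, Q s x = ∑ y, ∑ x, Q s x * F x y := by
      rw [Finset.sum_comm]
      simp_rw [← Finset.mul_sum, hFrow, mul_one]
    rw [h]
    apply Finset.sum_le_sum
    intro y _
    exact Finset.le_sup' (fun s => ∑ x, Q s x * F x y) (Finset.mem_univ s)
  · have key : ∀ y, Finset.univ.sup' Finset.univ_nonempty (fun s => ∑ x, Q s x * F x y)
        ≤ ∑ x, (Finset.univ.sup' Finset.univ_nonempty (fun s => Q s x)) * F x y := by
      intro y
      apply Finset.sup'_le
      intro s _
      apply Finset.sum_le_sum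
      intro x _
      exact mul_le_mul_of_nonneg_right
        (Finset.le_sup' (fun s => Q s x) (Finset.mem_univ s)) (hF x y)
    calc ∑ y, Finset.univ.sup' Finset.univ_nonempty (fun s => ∑ x, Q s x * F x y)
        ≤ ∑ y, ∑ x, (Finset.univ.sup' Finset.univ_nonempty (fun s => Q s x)) * F x y :=
          Finset.sum_le_sum fun y _ => key y
      _ = ∑ x, Finset.univ.sup' Finset.univ_nonempty (fun s => Q s x) := by
          rw [Finset.sum_comm]
          simp_rw [← Finset.mul_sum, hFrow, mul_one]
end
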